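/- Let p ≥ 2 be an integer. Let X, X'_1, …, X'_p be mutually independent random elements (with values in measurable spaces E and E' respectively), where X'_1, …, X'_p are identically distributed. Let f : E × E' → ℝ be measurable and set Y_i = f(X, X'_i) for i = 1, …, p. Assume Y_1 ∈ L^p. Then E[(E[Y_1 | X] − E[Y_1])^p] = E[∏_{i=1}^p (Y_i − E[Y_1])]. -/

import Mathlib

/-!
Independence makes the law of `(X, X'_1, …, X'_p)` the product `μ ⊗ ν^{⊗p}` of the laws of `X`
and of the `X'_i`. Writing `h = f - E[Y_1]`, this gives `E[h(X, X'_1) | X] = g(X)` with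
`g x = ∫ h(x, y) dν(y)`, so the left side is `∫ g^p dμ`; by Fubini on `μ ⊗ ν^{⊗p}` the right side
is `∫ (∫ ∏ᵢ h(x, yᵢ) dν^{⊗p}(y)) dμ(x) = ∫ g^p dμ` as well. The product is integrable by the
generalized Hölder inequality, since each factor lies in `L^p`.
-/

open MeasureTheory ProbabilityTheory

namespace ProbabilityTheory

section Independence

variable {Ω ι : Type*} [MeasurableSpace Ω] {P : Measure Ω} [Fintype ι]
  {β : Option ι → Type*} {m : ∀ i, MeasurableSpace (β i)} {F : ∀ i, Ω → β i}

lemma iIndepFun.indepFun_none_pi (hF : ∀ i, Measurable (F i)) (h : iIndepFun F P) :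
    IndepFun (F none) (fun ω j => F (some j) ω) P := by
  classical
  have h₁ := h.indepFun_finset {none} (Finset.univ.image some) (by simp) hF
  exact h₁.comp (measurable_pi_apply (⟨none, by simp⟩ : ({none} : Finset (Option ι))))
    (measurable_pi_lambda _ fun j =>
      measurable_pi_apply (⟨some j, by simp⟩ : (Finset.univ.image some : Finset (Option ι))))

lemma iIndepFun.hasLaw_prodMk_pi [IsFiniteMeasure P] {ν : ∀ j, Measure (β (some j))}
    (hF : ∀ i, Measurable (F i)) (h : iIndepFun F P) (hν : ∀ j, HasLaw (F (some j)) (ν j) P) :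
    HasLaw (fun ω => (F none ω, fun j => F (some j) ω)) ((P.map (F none)).prod (Measure.pi ν)) P :=
  (h.indepFun_none_pi hF).hasLaw_prod ⟨(hF none).aemeasurable, rfl⟩
    ((h.precomp (Option.some_injective ι)).hasLaw_pi hν)

end Independence

variable {Ω E E' ι : Type*} [MeasurableSpace Ω] [mE : MeasurableSpace E] [MeasurableSpace E']
  {P : Measure Ω} {μ : Measure E} {ν : Measure E'} [IsProbabilityMeasure ν]

lemma integrable_prod_comp_eval_of_memLp [SFinite μ] [Fintype ι] [Nonempty ι] {h : E × E' → ℝ}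
    (hh : MemLp h (Fintype.card ι) (μ.prod ν)) :
    Integrable (fun z : E × (ι → E') => ∏ j, h (z.1, z.2 j)) (μ.prod (Measure.pi fun _ => ν)) := by
  have hHolder := MemLp.prod' (s := (Finset.univ : Finset ι)) fun j _ =>
    hh.comp_measurePreserving ((MeasurePreserving.id μ).prod (measurePreserving_eval _ j))
  rw [← memLp_one_iff_integrable]
  convert hHolder using 1
  · rfl
  · rw [Finset.sum_const, Finset.card_univ, nsmul_eq_mul,
      ENNReal.mul_inv_cancel (by positivity) (ENNReal.natCast_ne_top _), inv_one]

variable [IsFiniteMeasure P]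

lemma condExp_comap_ae_eq_integral_of_hasLaw_prod {F : Type*} [NormedAddCommGroup F]
    [NormedSpace ℝ F] [CompleteSpace F] {X : Ω → E} {Z : Ω → E'} (hX : Measurable X)
    (hXZ : HasLaw (fun ω => (X ω, Z ω)) (μ.prod ν) P) {h : E × E' → F}
    (hm : StronglyMeasurable h) (hint : Integrable h (μ.prod ν)) :
    P[fun ω => h (X ω, Z ω) | mE.comap X] =ᵐ[P] fun ω => ∫ y, h (X ω, y) ∂ν := by
  have hXμ : HasLaw X μ P := measurePreserving_fst.comp_hasLaw hXZ
  have : IsFiniteMeasure μ := hXμ.isFiniteMeasure_iff.1 ‹_›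
  have hg : StronglyMeasurable fun x => ∫ y, h (x, y) ∂ν := hm.integral_prod_right'
  have hgX : Integrable (fun ω => ∫ y, h (X ω, y) ∂ν) P :=
    (integrable_map_measure hg.aestronglyMeasurable hX.aemeasurable).1
      (hXμ.map_eq ▸ hint.integral_prod_left)
  refine (ae_eq_condExp_of_forall_setIntegral_eq hX.comap_le ?_
    (fun _ _ _ => hgX.integrableOn) ?_
    (hg.comp_measurable (Measurable.of_comap_le le_rfl)).aestronglyMeasurable).symm
  · exact (integrable_map_measure hm.aestronglyMeasurable hXZ.aemeasurable).1
      (hXZ.map_eq ▸ hint)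
  · rintro _ ⟨A, hA, rfl⟩ _
    calc ∫ ω in X ⁻¹' A, ∫ y, h (X ω, y) ∂ν ∂P = ∫ x in A, ∫ y, h (x, y) ∂ν ∂μ := by
          rw [← hXμ.map_eq, setIntegral_map hA hg.aestronglyMeasurable hX.aemeasurable]
      _ = ∫ z in A ×ˢ Set.univ, h z ∂(μ.prod ν) := by
          rw [setIntegral_prod _ hint.integrableOn, Measure.restrict_univ]
      _ = ∫ ω in X ⁻¹' A, h (X ω, Z ω) ∂P := by
          rw [← hXZ.map_eq, setIntegral_map (hA.prod .univ) hm.aestronglyMeasurable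
            hXZ.aemeasurable, Set.mk_preimage_prod, Set.preimage_univ, Set.inter_univ]

theorem integral_condExp_pow_eq_integral_prod [Fintype ι] {X : Ω → E} {Z : ι → Ω → E'}
    (hX : Measurable X)
    (hXZ : HasLaw (fun ω => (X ω, fun i => Z i ω)) (μ.prod (Measure.pi fun _ => ν)) P)
    {h : E × E' → ℝ} (hm : StronglyMeasurable h) (i : ι)
    (hLp : MemLp (fun ω => h (X ω, Z i ω)) (Fintype.card ι) P) :
    ∫ ω, (P[fun ω => h (X ω, Z i ω) | mE.comap X] ω) ^ Fintype.card ι ∂P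
      = ∫ ω, ∏ j, h (X ω, Z j ω) ∂P := by
  have : Nonempty ι := ⟨i⟩
  have hXμ : HasLaw X μ P := measurePreserving_fst.comp_hasLaw hXZ
  have : IsFiniteMeasure μ := hXμ.isFiniteMeasure_iff.1 ‹_›
  have hpair (j : ι) : HasLaw (fun ω => (X ω, Z j ω)) (μ.prod ν) P :=
    ((MeasurePreserving.id μ).prod (measurePreserving_eval _ j)).comp_hasLaw hXZ
  have hhLp : MemLp h (Fintype.card ι) (μ.prod ν) := by
    rw [← (hpair i).map_eq]
    exact (memLp_map_measure_iff hm.aestronglyMeasurable (hpair i).aemeasurable).2 hLp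
  have hprod := integrable_prod_comp_eval_of_memLp (ι := ι) hhLp
  calc ∫ ω, (P[fun ω => h (X ω, Z i ω) | mE.comap X] ω) ^ Fintype.card ι ∂P
      = ∫ ω, (∫ y, h (X ω, y) ∂ν) ^ Fintype.card ι ∂P := by
        refine integral_congr_ae ?_
        filter_upwards [condExp_comap_ae_eq_integral_of_hasLaw_prod hX (hpair i) hm
          (hhLp.integrable (by exact_mod_cast Fintype.card_pos))] with ω hω
        rw [hω]
    _ = ∫ x, (∫ y, h (x, y) ∂ν) ^ Fintype.card ι ∂μ :=
        hXμ.integral_comp (hm.integral_prod_right'.pow _).aestronglyMeasurable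
    _ = ∫ x, ∫ v, ∏ j, h (x, v j) ∂(Measure.pi fun _ => ν) ∂μ := by
        congr 1 with x
        exact (integral_fintype_prod_eq_pow (fun y => h (x, y))).symm
    _ = ∫ z, ∏ j, h (z.1, z.2 j) ∂(μ.prod (Measure.pi fun _ => ν)) :=
        (integral_prod _ hprod).symm
    _ = ∫ ω, ∏ j, h (X ω, Z j ω) ∂P :=
        (hXZ.integral_comp hprod.aestronglyMeasurable).symm

end ProbabilityTheory

theorem pick_and_freeze_higher_order
    {Ω : Type*} {E E' : Type u} [MeasurableSpace Ω] [mE : MeasurableSpace E]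
    [mE' : MeasurableSpace E'] (P : Measure Ω) [IsProbabilityMeasure P]
    (p : ℕ)
    (X : Ω → E) (X' : Fin p → Ω → E')
    (hX : Measurable X) (hX' : ∀ i, Measurable (X' i))
    (hindep : iIndepFun
      (β := fun i : Option (Fin p) => Option.elim i E fun _ => E')
      (m := fun i => match i with | none => mE | some _ => mE')
      (fun i => match i with | none => X | some j => X' j) P)
    (hid : ∀ i j, Measure.map (X' i) P = Measure.map (X' j) P)
    (f : E × E' → ℝ) (hf : Measurable f)
    (Y : Fin p → Ω → ℝ) (hYdef : ∀ i ω, Y i ω = f (X ω, X' i ω))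
    (i0 : Fin p)
    (hLp : MemLp (Y i0) p P) :
    ∫ ω, ((MeasureTheory.condExp (MeasurableSpace.comap X mE) P (Y i0)) ω
        - ∫ ω', Y i0 ω' ∂P) ^ p ∂P
      = ∫ ω, ∏ i, (Y i ω - ∫ ω', Y i0 ω' ∂P) ∂P := by
  obtain rfl : Y = fun i ω => f (X ω, X' i ω) := funext₂ hYdef
  have : IsProbabilityMeasure (P.map (X' i0)) :=
    Measure.isProbabilityMeasure_map (hX' i0).aemeasurable
  set m := ∫ ω, f (X ω, X' i0 ω) ∂P
  have hlaw : HasLaw (fun ω => (X ω, fun i => X' i ω))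
      ((P.map X).prod (Measure.pi fun _ => P.map (X' i0))) P :=
    hindep.hasLaw_prodMk_pi (fun | none => hX | some j => hX' j)
      fun j => ⟨(hX' j).aemeasurable, hid j i0⟩
  have hcentre : P[fun ω => f (X ω, X' i0 ω) | mE.comap X] - (fun _ => m)
      =ᵐ[P] P[fun ω => f (X ω, X' i0 ω) - m | mE.comap X] := by
    rw [← condExp_const (μ := P) hX.comap_le m]
    exact (condExp_sub (hLp.integrable (by exact_mod_cast i0.pos)) (integrable_const m) _).symm
  calc _ = ∫ ω, (P[fun ω => f (X ω, X' i0 ω) - m | mE.comap X] ω) ^ Fintype.card (Fin p) ∂P := by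
        rw [Fintype.card_fin]
        exact integral_congr_ae (hcentre.mono fun ω hω => congrArg (· ^ p) hω)
    _ = _ := integral_condExp_pow_eq_integral_prod (h := fun z => f z - m) hX hlaw
        (hf.stronglyMeasurable.sub stronglyMeasurable_const) i0
        (by rw [Fintype.card_fin]; exact hLp.sub (memLp_const m))
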